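/- arXiv:2409.14054 — 4 statements merged into one kernel-verified Lean document; each statement's English description precedes it below -/
import Mathlib

section
/- For u in the Sobolev space W^{1,2}(ℝ²), the L³ norm of u satisfies ‖u‖₃ ≤ (π/2)^{1/6} ‖u‖_{1,2}, where ‖u‖_{1,2} = (‖u‖₂² + ‖∇u‖₂²)^{1/2}. -/
/-!
A real-variable (Gagliardo–Nirenberg type) argument. Integrating `∂₁(u²) = 2 u ∂₁u` along a
horizontal line gives `u(x, y)² ≤ 2 ∫ |u ∂₁u|(s, y) ds` for every `x`, and integrating along
vertical lines gives `∫ u(x, y)² dx ≤ 2 ‖u ∂₂u‖₁` for every `y`. Writing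
`|u|³ ≤ (sup_x |u|) u²` on each horizontal line and applying Cauchy–Schwarz in `y` gives
`(∫ |u|³)² ≤ 4 ‖u‖₂² ‖u ∂₁u‖₁ ‖u ∂₂u‖₁ ≤ 4 ‖u‖₂⁴ ‖∇u‖₂²`, and
`4 p² q ≤ (16/27) (p + q)³ ≤ (π/2) (p + q)³`.
-/

open MeasureTheory Filter Topology Set ENNReal

theorem sq_le_two_mul_integral_abs_mul_deriv {f f' : ℝ → ℝ} (hf : ∀ x, HasDerivAt f (f' x) x)
    (hf2 : Integrable fun t => f t ^ 2) (hff' : Integrable fun t => f t * f' t) (x : ℝ) :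
    f x ^ 2 ≤ 2 * ∫ t, |f t * f' t| := by
  have hderiv : ∀ t, HasDerivAt (fun s => f s ^ 2) (2 * (f t * f' t)) t := fun t =>
    ((hf t).fun_pow 2).congr_deriv (by push_cast; ring)
  have hint : Integrable fun t => 2 * (f t * f' t) := hff'.const_mul 2
  have hlim : Tendsto (fun s => f s ^ 2) atBot (𝓝 0) :=
    tendsto_zero_of_hasDerivAt_of_integrableOn_Iic (a := x) (fun t _ => hderiv t)
      hint.integrableOn hf2.integrableOn
  have hFTC : ∫ t in Iic x, 2 * (f t * f' t) = f x ^ 2 := by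
    simpa using integral_Iic_of_hasDerivAt_of_tendsto' (fun t _ => hderiv t) hint.integrableOn hlim
  calc f x ^ 2 = ∫ t in Iic x, 2 * (f t * f' t) := hFTC.symm
    _ ≤ ∫ t in Iic x, |2 * (f t * f' t)| :=
      integral_mono hint.integrableOn hint.abs.integrableOn fun t => le_abs_self _
    _ ≤ ∫ t, |2 * (f t * f' t)| :=
      setIntegral_le_integral hint.abs (ae_of_all _ fun t => abs_nonneg _)
    _ = 2 * ∫ t, |f t * f' t| := by
      simp only [abs_mul, abs_two, integral_const_mul]

theorem enorm_sq_le_two_mul_lintegral_enorm_mul_deriv {f f' : ℝ → ℝ}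
    (hf : ∀ x, HasDerivAt f (f' x) x) (hf2 : ∫⁻ t, ‖f t‖ₑ ^ 2 ≠ ⊤)
    (hff' : ∫⁻ t, ‖f t‖ₑ * ‖f' t‖ₑ ≠ ⊤) (x : ℝ) :
    ‖f x‖ₑ ^ 2 ≤ 2 * ∫⁻ t, ‖f t‖ₑ * ‖f' t‖ₑ := by
  have hfc : Continuous f := continuous_iff_continuousAt.2 fun t => (hf t).continuousAt
  have hf' : Measurable f' := by
    simpa only [funext fun t => (hf t).deriv] using measurable_deriv f
  have hf2i : Integrable fun t => f t ^ 2 :=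
    ⟨(hfc.pow 2).aestronglyMeasurable, by simpa [HasFiniteIntegral, enorm_pow] using hf2.lt_top⟩
  have hff'i : Integrable fun t => f t * f' t :=
    ⟨(hfc.measurable.mul hf').aestronglyMeasurable,
      by simpa [HasFiniteIntegral, enorm_mul] using hff'.lt_top⟩
  have := sq_le_two_mul_integral_abs_mul_deriv hf hf2i hff'i x
  calc ‖f x‖ₑ ^ 2 = ENNReal.ofReal (f x ^ 2) := by
        rw [Real.enorm_eq_ofReal_abs, ← ENNReal.ofReal_pow (abs_nonneg _), sq_abs]
    _ ≤ ENNReal.ofReal (2 * ∫ t, ‖f t * f' t‖) := ENNReal.ofReal_le_ofReal this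
    _ = 2 * ∫⁻ t, ‖f t‖ₑ * ‖f' t‖ₑ := by
      rw [ENNReal.ofReal_mul zero_le_two, ofReal_integral_norm_eq_lintegral_enorm hff'i]
      simp [enorm_mul]

theorem lintegral_mul_sq_le_sq_mul_sq {α : Type*} [MeasurableSpace α] {μ : Measure α}
    {f g : α → ℝ≥0∞} (hf : AEMeasurable f μ) (hg : AEMeasurable g μ) :
    (∫⁻ a, f a * g a ∂μ) ^ 2 ≤ (∫⁻ a, f a ^ 2 ∂μ) * ∫⁻ a, g a ^ 2 ∂μ := by
  have h := ENNReal.lintegral_mul_le_Lp_mul_Lq μ Real.HolderConjugate.two_two hf hg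
  simp only [ENNReal.rpow_two, Pi.mul_apply] at h
  calc (∫⁻ a, f a * g a ∂μ) ^ 2
      ≤ ((∫⁻ a, f a ^ 2 ∂μ) ^ (1 / 2 : ℝ) * (∫⁻ a, g a ^ 2 ∂μ) ^ (1 / 2 : ℝ)) ^ 2 := by gcongr
    _ = (∫⁻ a, f a ^ 2 ∂μ) * ∫⁻ a, g a ^ 2 ∂μ := by
      rw [mul_pow, ← ENNReal.rpow_natCast, ← ENNReal.rpow_mul, ← ENNReal.rpow_natCast (_ ^ _),
        ← ENNReal.rpow_mul]
      norm_num

section Plane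

variable {v d₁ d₂ : ℝ × ℝ → ℝ}

theorem ae_forall_enorm_sq_le_lintegral_fst (hv : Measurable v) (hd₁ : Measurable d₁)
    (hder₁ : ∀ x y, HasDerivAt (fun t => v (t, y)) (d₁ (x, y)) x)
    (hP : ∫⁻ r, ‖v r‖ₑ ^ 2 ≠ ⊤) (hM₁ : ∫⁻ r, ‖v r‖ₑ * ‖d₁ r‖ₑ ≠ ⊤) :
    ∀ᵐ y, ∀ x, ‖v (x, y)‖ₑ ^ 2 ≤ 2 * ∫⁻ s, ‖v (s, y)‖ₑ * ‖d₁ (s, y)‖ₑ := by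
  have fiber : ∀ F : ℝ × ℝ → ℝ≥0∞, Measurable F → ∫⁻ r, F r ≠ ⊤ →
      ∀ᵐ y, ∫⁻ x, F (x, y) ≠ ⊤ := fun F hF hfin => by
    refine (ae_lt_top hF.lintegral_prod_left' ?_).mono fun y hy => hy.ne
    rwa [← lintegral_prod_symm' F hF, ← Measure.volume_eq_prod]
  filter_upwards [fiber _ (hv.enorm.pow_const 2) hP, fiber _ (hv.enorm.mul hd₁.enorm) hM₁]
    with y hy₁ hy₂ x
  exact enorm_sq_le_two_mul_lintegral_enorm_mul_deriv (fun x => hder₁ x y) hy₁ hy₂ x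

theorem ae_forall_enorm_sq_le_lintegral_snd (hv : Measurable v) (hd₂ : Measurable d₂)
    (hder₂ : ∀ x y, HasDerivAt (fun t => v (x, t)) (d₂ (x, y)) y)
    (hP : ∫⁻ r, ‖v r‖ₑ ^ 2 ≠ ⊤) (hM₂ : ∫⁻ r, ‖v r‖ₑ * ‖d₂ r‖ₑ ≠ ⊤) :
    ∀ᵐ x, ∀ y, ‖v (x, y)‖ₑ ^ 2 ≤ 2 * ∫⁻ s, ‖v (x, s)‖ₑ * ‖d₂ (x, s)‖ₑ := by
  have swap : ∀ F : ℝ × ℝ → ℝ≥0∞, ∫⁻ r : ℝ × ℝ, F r.swap = ∫⁻ r, F r :=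
    Measure.measurePreserving_swap.lintegral_comp_emb MeasurableEquiv.prodComm.measurableEmbedding
  exact ae_forall_enorm_sq_le_lintegral_fst (v := v ∘ Prod.swap) (d₁ := d₂ ∘ Prod.swap)
    (hv.comp measurable_swap) (hd₂.comp measurable_swap) (fun y x => hder₂ x y)
    ((swap _).trans_ne hP) ((swap _).trans_ne hM₂)

theorem lintegral_enorm_sq_fst_le (hv : Measurable v) (hd₂ : Measurable d₂)
    (hder₂ : ∀ x y, HasDerivAt (fun t => v (x, t)) (d₂ (x, y)) y)
    (hP : ∫⁻ r, ‖v r‖ₑ ^ 2 ≠ ⊤) (hM₂ : ∫⁻ r, ‖v r‖ₑ * ‖d₂ r‖ₑ ≠ ⊤) (y : ℝ) :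
    ∫⁻ x, ‖v (x, y)‖ₑ ^ 2 ≤ 2 * ∫⁻ r, ‖v r‖ₑ * ‖d₂ r‖ₑ := by
  have hvd₂ : Measurable fun r => ‖v r‖ₑ * ‖d₂ r‖ₑ := hv.enorm.mul hd₂.enorm
  calc ∫⁻ x, ‖v (x, y)‖ₑ ^ 2 ≤ ∫⁻ x, 2 * ∫⁻ s, ‖v (x, s)‖ₑ * ‖d₂ (x, s)‖ₑ :=
        lintegral_mono_ae ((ae_forall_enorm_sq_le_lintegral_snd hv hd₂ hder₂ hP hM₂).mono
          fun x hx => hx y)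
    _ = 2 * ∫⁻ r, ‖v r‖ₑ * ‖d₂ r‖ₑ := by
      rw [lintegral_const_mul _ hvd₂.lintegral_prod_right', Measure.volume_eq_prod,
        lintegral_prod _ hvd₂.aemeasurable]

theorem lintegral_enorm_pow_three_le (hv : Measurable v) (hd₁ : Measurable d₁)
    (hder₁ : ∀ x y, HasDerivAt (fun t => v (t, y)) (d₁ (x, y)) x)
    (hP : ∫⁻ r, ‖v r‖ₑ ^ 2 ≠ ⊤) (hM₁ : ∫⁻ r, ‖v r‖ₑ * ‖d₁ r‖ₑ ≠ ⊤) :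
    ∫⁻ r, ‖v r‖ₑ ^ 3 ≤ ∫⁻ y, (2 * ∫⁻ x, ‖v (x, y)‖ₑ * ‖d₁ (x, y)‖ₑ) ^ (2⁻¹ : ℝ) *
      ∫⁻ x, ‖v (x, y)‖ₑ ^ 2 := by
  rw [Measure.volume_eq_prod, lintegral_prod_symm' _ (hv.enorm.pow_const 3)]
  refine lintegral_mono_ae
    ((ae_forall_enorm_sq_le_lintegral_fst hv hd₁ hder₁ hP hM₁).mono fun y hy => ?_)
  rw [← lintegral_const_mul (f := fun x => ‖v (x, y)‖ₑ ^ 2) _ (by fun_prop)]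
  refine lintegral_mono fun x => ?_
  calc ‖v (x, y)‖ₑ ^ 3 = (‖v (x, y)‖ₑ ^ 2) ^ (2⁻¹ : ℝ) * ‖v (x, y)‖ₑ ^ 2 := by
        rw [show (2⁻¹ : ℝ) = ((2 : ℕ) : ℝ)⁻¹ by norm_num,
          ENNReal.pow_rpow_inv_natCast two_ne_zero]
        ring
    _ ≤ _ := by gcongr; exact hy x

theorem sq_lintegral_enorm_pow_three_le (hv : Measurable v) (hd₁ : Measurable d₁)
    (hd₂ : Measurable d₂)
    (hder₁ : ∀ x y, HasDerivAt (fun t => v (t, y)) (d₁ (x, y)) x)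
    (hder₂ : ∀ x y, HasDerivAt (fun t => v (x, t)) (d₂ (x, y)) y)
    (hP : ∫⁻ r, ‖v r‖ₑ ^ 2 ≠ ⊤) (hM₁ : ∫⁻ r, ‖v r‖ₑ * ‖d₁ r‖ₑ ≠ ⊤)
    (hM₂ : ∫⁻ r, ‖v r‖ₑ * ‖d₂ r‖ₑ ≠ ⊤) :
    (∫⁻ r, ‖v r‖ₑ ^ 3) ^ 2 ≤
      4 * (∫⁻ r, ‖v r‖ₑ ^ 2) * (∫⁻ r, ‖v r‖ₑ * ‖d₁ r‖ₑ) * ∫⁻ r, ‖v r‖ₑ * ‖d₂ r‖ₑ := by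
  have hv2 : Measurable fun r => ‖v r‖ₑ ^ 2 := hv.enorm.pow_const 2
  have hvd₁ : Measurable fun r => ‖v r‖ₑ * ‖d₁ r‖ₑ := hv.enorm.mul hd₁.enorm
  set P := ∫⁻ r, ‖v r‖ₑ ^ 2
  set M₁ := ∫⁻ r, ‖v r‖ₑ * ‖d₁ r‖ₑ
  set M₂ := ∫⁻ r, ‖v r‖ₑ * ‖d₂ r‖ₑ
  let a y := (2 * ∫⁻ x, ‖v (x, y)‖ₑ * ‖d₁ (x, y)‖ₑ) ^ (2⁻¹ : ℝ)
  let A y := ∫⁻ x, ‖v (x, y)‖ₑ ^ 2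
  have ha : ∫⁻ y, a y ^ 2 = 2 * M₁ := by
    simp_rw [a, show (2⁻¹ : ℝ) = ((2 : ℕ) : ℝ)⁻¹ by norm_num,
      ENNReal.rpow_inv_natCast_pow two_ne_zero]
    rw [lintegral_const_mul _ hvd₁.lintegral_prod_left', ← lintegral_prod_symm' _ hvd₁,
      ← Measure.volume_eq_prod]
  have hA : ∫⁻ y, A y ^ 2 ≤ 2 * M₂ * P :=
    calc ∫⁻ y, A y ^ 2 ≤ ∫⁻ y, 2 * M₂ * A y := lintegral_mono fun y => by
          rw [sq]; exact mul_le_mul_left (lintegral_enorm_sq_fst_le hv hd₂ hder₂ hP hM₂ y) _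
      _ = 2 * M₂ * P := by
        rw [lintegral_const_mul _ hv2.lintegral_prod_left', ← lintegral_prod_symm' _ hv2,
          ← Measure.volume_eq_prod]
  calc (∫⁻ r, ‖v r‖ₑ ^ 3) ^ 2 ≤ (∫⁻ y, a y * A y) ^ 2 := by
        gcongr; exact lintegral_enorm_pow_three_le hv hd₁ hder₁ hP hM₁
    _ ≤ (∫⁻ y, a y ^ 2) * ∫⁻ y, A y ^ 2 := lintegral_mul_sq_le_sq_mul_sq (by fun_prop) (by fun_prop)
    _ ≤ 2 * M₁ * (2 * M₂ * P) := by rw [ha]; gcongr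
    _ = 4 * P * M₁ * M₂ := by ring

end Plane

theorem measurable_gradient {E : Type*} [NormedAddCommGroup E] [InnerProductSpace ℝ E]
    [CompleteSpace E] [MeasurableSpace E] [BorelSpace E] (u : E → ℝ) :
    Measurable (gradient u) :=
  (InnerProductSpace.toDual ℝ E).symm.continuous.measurable.comp (measurable_fderiv ℝ u)

theorem DifferentiableAt.hasDerivAt_comp_of_hasDerivAt_single {ι : Type*} [Fintype ι]
    [DecidableEq ι] {u : EuclideanSpace ℝ ι → ℝ} {γ : ℝ → EuclideanSpace ℝ ι} {x : ℝ} {i : ι}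
    (hu : DifferentiableAt ℝ u (γ x)) (hγ : HasDerivAt γ (EuclideanSpace.single i 1) x) :
    HasDerivAt (fun t => u (γ t)) (gradient u (γ x) i) x := by
  refine (hu.hasGradientAt.hasFDerivAt.comp_hasDerivAt x hγ).congr_deriv ?_
  rw [InnerProductSpace.toDual_apply_apply, EuclideanSpace.inner_single_right]
  simp

noncomputable def euclideanOfProd : (ℝ × ℝ) ≃L[ℝ] EuclideanSpace ℝ (Fin 2) :=
  ((EuclideanSpace.equiv (Fin 2) ℝ).trans (ContinuousLinearEquiv.finTwoArrow ℝ ℝ)).symm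

theorem measurePreserving_euclideanOfProd : MeasurePreserving euclideanOfProd :=
  (PiLp.volume_preserving_toLp (Fin 2)).comp (volume_preserving_finTwoArrow ℝ).symm

theorem hasDerivAt_euclideanOfProd_fst (x y : ℝ) :
    HasDerivAt (fun t => euclideanOfProd (t, y)) (EuclideanSpace.single 0 1) x :=
  (euclideanOfProd.hasFDerivAt.comp_hasDerivAt x
    ((hasDerivAt_id x).prodMk (hasDerivAt_const x y))).congr_deriv (by ext i; fin_cases i <;> rfl)

theorem hasDerivAt_euclideanOfProd_snd (x y : ℝ) :
    HasDerivAt (fun t => euclideanOfProd (x, t)) (EuclideanSpace.single 1 1) y :=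
  (euclideanOfProd.hasFDerivAt.comp_hasDerivAt y
    ((hasDerivAt_const y x).prodMk (hasDerivAt_id y))).congr_deriv (by ext i; fin_cases i <;> rfl)

theorem sq_lintegral_enorm_pow_three_le_of_differentiable {u : EuclideanSpace ℝ (Fin 2) → ℝ}
    (hu : Differentiable ℝ u) (hP : ∫⁻ x, ‖u x‖ₑ ^ 2 ≠ ⊤)
    (hQ : ∫⁻ x, ‖gradient u x‖ₑ ^ 2 ≠ ⊤) :
    (∫⁻ x, ‖u x‖ₑ ^ 3) ^ 2 ≤ 4 * (∫⁻ x, ‖u x‖ₑ ^ 2) ^ 2 * ∫⁻ x, ‖gradient u x‖ₑ ^ 2 := by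
  set L := euclideanOfProd
  have hL : ∀ F : EuclideanSpace ℝ (Fin 2) → ℝ≥0∞, ∫⁻ r, F (L r) = ∫⁻ x, F x := fun F =>
    measurePreserving_euclideanOfProd.lintegral_comp_emb L.toHomeomorph.measurableEmbedding F
  set P := ∫⁻ x, ‖u x‖ₑ ^ 2
  set Q := ∫⁻ x, ‖gradient u x‖ₑ ^ 2
  let d : Fin 2 → ℝ × ℝ → ℝ := fun i r => gradient u (L r) i
  have hv : Measurable fun r => u (L r) := (hu.continuous.comp L.continuous).measurable
  have hd : ∀ i, Measurable (d i) := fun i => by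
    have := measurable_gradient u
    fun_prop
  let M i := ∫⁻ r, ‖u (L r)‖ₑ * ‖d i r‖ₑ
  have hM : ∀ i, M i ^ 2 ≤ P * Q := fun i =>
    calc M i ^ 2 ≤ (∫⁻ r, ‖u (L r)‖ₑ ^ 2) * ∫⁻ r, ‖d i r‖ₑ ^ 2 :=
          lintegral_mul_sq_le_sq_mul_sq hv.enorm.aemeasurable (hd i).enorm.aemeasurable
      _ ≤ P * ∫⁻ r, ‖gradient u (L r)‖ₑ ^ 2 := by
        rw [hL fun x => ‖u x‖ₑ ^ 2]
        gcongr with r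
        exact PiLp.enorm_apply_le _ i
      _ = P * Q := by rw [hL fun x => ‖gradient u x‖ₑ ^ 2]
  have hM_ne_top : ∀ i, M i ≠ ⊤ := fun i h => by
    simpa [h] using (hM i).trans_lt (mul_lt_top hP.lt_top hQ.lt_top)
  have hMM : M 0 * M 1 ≤ P * Q := by
    rw [← ENNReal.pow_le_pow_left_iff two_ne_zero, mul_pow, sq (P * Q)]
    exact mul_le_mul' (hM 0) (hM 1)
  have key := sq_lintegral_enorm_pow_three_le hv (hd 0) (hd 1)
    (fun x y => (hu _).hasDerivAt_comp_of_hasDerivAt_single (hasDerivAt_euclideanOfProd_fst x y))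
    (fun x y => (hu _).hasDerivAt_comp_of_hasDerivAt_single (hasDerivAt_euclideanOfProd_snd x y))
    (by rwa [hL fun x => ‖u x‖ₑ ^ 2]) (hM_ne_top 0) (hM_ne_top 1)
  rw [hL fun x => ‖u x‖ₑ ^ 3, hL fun x => ‖u x‖ₑ ^ 2] at key
  calc (∫⁻ x, ‖u x‖ₑ ^ 3) ^ 2 ≤ 4 * P * (M 0 * M 1) := by rw [← mul_assoc]; exact key
    _ ≤ 4 * P * (P * Q) := by gcongr
    _ = 4 * P ^ 2 * Q := by ring

theorem integral_norm_pow_eq_toReal_lintegral {α E : Type*} [MeasurableSpace α] {μ : Measure α}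
    [NormedAddCommGroup E] {f : α → E} (hf : AEStronglyMeasurable f μ) (n : ℕ) :
    ∫ a, ‖f a‖ ^ n ∂μ = (∫⁻ a, ‖f a‖ₑ ^ n ∂μ).toReal := by
  rw [integral_eq_lintegral_of_nonneg_ae (f := fun a => ‖f a‖ ^ n)
    (ae_of_all _ fun a => by positivity) (hf.norm.pow n)]
  simp_rw [ENNReal.ofReal_pow (norm_nonneg _), ofReal_norm]

theorem rpow_one_third_le_of_sq_le_mul_pow_three {t c s : ℝ} (ht : 0 ≤ t) (hc : 0 ≤ c)
    (hs : 0 ≤ s) (h : t ^ 2 ≤ c * s ^ 3) : t ^ (1 / 3 : ℝ) ≤ c ^ (1 / 6 : ℝ) * √s := by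
  have root : ∀ {a : ℝ} (n : ℕ) (k : ℝ), 0 ≤ a → k * n = 1 → (a ^ k) ^ n = a :=
    fun n k ha hk => by rw [← Real.rpow_natCast, ← Real.rpow_mul ha, hk, Real.rpow_one]
  rw [← pow_le_pow_iff_left₀ (by positivity) (by positivity) (by norm_num : 6 ≠ 0)]
  calc (t ^ (1 / 3 : ℝ)) ^ 6 = t ^ 2 := by
        rw [show 6 = 3 * 2 by rfl, pow_mul, root 3 _ ht (by norm_num)]
    _ ≤ c * s ^ 3 := h
    _ = (c ^ (1 / 6 : ℝ) * √s) ^ 6 := by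
        rw [mul_pow, root 6 _ hc (by norm_num), show 6 = 2 * 3 by rfl, pow_mul, Real.sq_sqrt hs]

theorem sobolev_L3_bound_general (u : EuclideanSpace ℝ (Fin 2) → ℝ)
    (hdiff : Differentiable ℝ u)
    (h2 : Integrable (fun x => (u x) ^ 2))
    (hg : Integrable (fun x => ‖gradient u x‖ ^ 2)) :
    (∫ x, |u x| ^ 3) ^ ((1 : ℝ) / 3)
      ≤ (Real.pi / 2) ^ ((1 : ℝ) / 6) *
        Real.sqrt ((∫ x, (u x) ^ 2) + ∫ x, ‖gradient u x‖ ^ 2) := by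
  have hu : AEStronglyMeasurable u := hdiff.continuous.aestronglyMeasurable
  have hP : ∫⁻ x, ‖u x‖ₑ ^ 2 ≠ ⊤ := by simpa [enorm_pow] using h2.hasFiniteIntegral.ne
  have hQ : ∫⁻ x, ‖gradient u x‖ₑ ^ 2 ≠ ⊤ := by simpa [enorm_pow] using hg.hasFiniteIntegral.ne
  have key := ENNReal.toReal_mono (by finiteness)
    (sq_lintegral_enorm_pow_three_le_of_differentiable hdiff hP hQ)
  simp only [toReal_mul, toReal_pow, toReal_ofNat] at key
  rw [← integral_norm_pow_eq_toReal_lintegral hu, ← integral_norm_pow_eq_toReal_lintegral hu,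
    ← integral_norm_pow_eq_toReal_lintegral (measurable_gradient u).aestronglyMeasurable] at key
  simp only [Real.norm_eq_abs, sq_abs] at key
  set p := ∫ x, u x ^ 2
  set q := ∫ x, ‖gradient u x‖ ^ 2
  have hp : 0 ≤ p := integral_nonneg fun x => sq_nonneg _
  have hq : 0 ≤ q := integral_nonneg fun x => sq_nonneg _
  refine rpow_one_third_le_of_sq_le_mul_pow_three (integral_nonneg fun x => by positivity)
    (by positivity) (by positivity) ?_
  -- `16 (p + q)³ - 108 p² q = 4 (p - 2 q)² (4 p + q)`
  nlinarith [mul_nonneg (sq_nonneg (p - 2 * q)) (by positivity : 0 ≤ 4 * p + q),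
    Real.pi_gt_three, pow_nonneg (add_nonneg hp hq) 3]

theorem sobolev_L3_bound (u : EuclideanSpace ℝ (Fin 2) → ℝ)
    (hdiff : Differentiable ℝ u)
    (h2 : Integrable (fun x => (u x) ^ 2))
    (hg : Integrable (fun x => ‖gradient u x‖ ^ 2))
    (h3 : Integrable (fun x => |u x| ^ 3)) :
    (∫ x, |u x| ^ 3) ^ ((1 : ℝ) / 3)
      ≤ (Real.pi / 2) ^ ((1 : ℝ) / 6) *
        Real.sqrt ((∫ x, (u x) ^ 2) + ∫ x, ‖gradient u x‖ ^ 2) :=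
  sobolev_L3_bound_general u hdiff h2 hg
end

section
/- For every u ∈ W^{1,2}(ℝ²), ∫_{ℝ²} u(e^u - 1) dx ≥ ‖u‖₂⁴ / (‖u‖₂² + √(π/2) ‖u‖_{1,2}³). -/
/-!
Pointwise `u (eᵘ - 1) ≥ u² / (1 + |u|)`, and Cauchy–Schwarz with weight `1 + |u|` gives
`‖u‖₂⁴ ≤ (∫ u² / (1 + |u|)) (‖u‖₂² + ‖u‖₃³)`. Cauchy–Schwarz again gives `‖u‖₃⁶ ≤ ‖u‖₂² ‖u‖₄⁴`,
and Ladyzhenskaya's inequality `‖u‖₄⁴ ≤ 4 ‖u‖₂² ‖∇u‖₂²` comes from the estimate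
`‖v‖₂² ≤ ‖∂₁v‖₁ ‖∂₂v‖₁` applied to `v = u²`: on almost every horizontal (vertical) line, `|v|` is
bounded by the `L¹` norm of `∂₁v` (`∂₂v`) on that line, because an integrable function is small
somewhere on every half-line. What is left, `2 ‖u‖₂² ‖∇u‖₂ ≤ √(π/2) ‖u‖_{1,2}³`, is elementary.
-/

open MeasureTheory

theorem sq_div_one_add_abs_le_mul_exp_sub_one (t : ℝ) :
    t ^ 2 / (1 + |t|) ≤ t * (Real.exp t - 1) := by
  rcases le_or_gt 0 t with ht | ht
  · rw [abs_of_nonneg ht]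
    have h1 : t + 1 ≤ Real.exp t := Real.add_one_le_exp t
    have h2 : t ^ 2 / (1 + t) ≤ t ^ 2 := div_le_self (sq_nonneg t) (by linarith)
    nlinarith
  · rw [abs_of_neg ht, div_le_iff₀ (by linarith)]
    have h1 : -t + 1 ≤ Real.exp (-t) := Real.add_one_le_exp (-t)
    have h2 : Real.exp (-t) * Real.exp t = 1 := by rw [← Real.exp_add]; simp
    nlinarith [mul_nonneg (neg_pos.2 ht).le (sub_nonneg.2 h1), Real.exp_pos t]

section

variable {α : Type*} [MeasurableSpace α] {μ : Measure α}

theorem ENNReal.sq_lintegral_mul_le {f g : α → ENNReal} (hf : AEMeasurable f μ)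
    (hg : AEMeasurable g μ) :
    (∫⁻ a, f a * g a ∂μ) ^ 2 ≤ (∫⁻ a, f a ^ 2 ∂μ) * ∫⁻ a, g a ^ 2 ∂μ := by
  have h := ENNReal.lintegral_mul_le_Lp_mul_Lq μ Real.HolderConjugate.two_two hf hg
  simp only [Pi.mul_apply, ENNReal.rpow_two] at h
  calc (∫⁻ a, f a * g a ∂μ) ^ 2
      ≤ ((∫⁻ a, f a ^ 2 ∂μ) ^ (1 / 2 : ℝ) * (∫⁻ a, g a ^ 2 ∂μ) ^ (1 / 2 : ℝ)) ^ 2 := by gcongr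
    _ = _ := by
        rw [mul_pow, ← ENNReal.rpow_natCast, ← ENNReal.rpow_natCast, ← ENNReal.rpow_mul,
          ← ENNReal.rpow_mul]
        norm_num

theorem ENNReal.sq_lintegral_le_lintegral_div_mul_lintegral_mul {f w : α → ENNReal}
    (hf : AEMeasurable f μ) (hw : AEMeasurable w μ) (hw₀ : ∀ x, w x ≠ 0) (hw_top : ∀ x, w x ≠ ⊤) :
    (∫⁻ x, f x ∂μ) ^ 2 ≤ (∫⁻ x, f x / w x ∂μ) * ∫⁻ x, f x * w x ∂μ := by
  have hsq (y : ENNReal) : (y ^ (2⁻¹ : ℝ)) ^ 2 = y := by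
    exact_mod_cast ENNReal.rpow_inv_natCast_pow two_ne_zero y
  have hf_eq (x : α) : (f x / w x) ^ (2⁻¹ : ℝ) * (f x * w x) ^ (2⁻¹ : ℝ) = f x := by
    rw [← ENNReal.mul_rpow_of_nonneg _ _ (by norm_num), mul_left_comm,
      ENNReal.div_mul_cancel (hw₀ x) (hw_top x), ← sq]
    exact_mod_cast ENNReal.pow_rpow_inv_natCast two_ne_zero (f x)
  have h := ENNReal.sq_lintegral_mul_le ((hf.div hw).pow_const (2⁻¹ : ℝ))
    ((hf.mul hw).pow_const (2⁻¹ : ℝ))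
  simpa only [Pi.div_apply, Pi.mul_apply, hf_eq, hsq] using h

theorem sq_lintegral_enorm_sq_le {u : α → ℝ} (hu : Measurable u) :
    (∫⁻ x, ‖u x‖ₑ ^ 2 ∂μ) ^ 2 ≤
      (∫⁻ x, ‖u x‖ₑ ^ 2 / (1 + ‖u x‖ₑ) ∂μ) * ((∫⁻ x, ‖u x‖ₑ ^ 2 ∂μ) + ∫⁻ x, ‖u x‖ₑ ^ 3 ∂μ) := by
  have hmu : Measurable fun x => ‖u x‖ₑ := hu.enorm
  calc _ ≤ (∫⁻ x, ‖u x‖ₑ ^ 2 / (1 + ‖u x‖ₑ) ∂μ) * ∫⁻ x, ‖u x‖ₑ ^ 2 * (1 + ‖u x‖ₑ) ∂μ :=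
        ENNReal.sq_lintegral_le_lintegral_div_mul_lintegral_mul (hmu.pow_const 2).aemeasurable
          (measurable_const.add hmu).aemeasurable (by simp) (by simp)
    _ = _ := by
        congr 1
        simp only [mul_add, mul_one, ← pow_succ, Nat.reduceAdd]
        exact lintegral_add_left (hmu.pow_const 2) _

theorem lintegral_enorm_sq_eq_ofReal_integral {f : α → ℝ}
    (hf : Integrable (fun x => f x ^ 2) μ) :
    ∫⁻ x, ‖f x‖ₑ ^ 2 ∂μ = ENNReal.ofReal (∫ x, f x ^ 2 ∂μ) := by
  simpa [enorm_pow] using (ofReal_integral_norm_eq_lintegral_enorm hf).symm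

end

theorem enorm_le_lintegral_enorm_deriv {f : ℝ → ℝ} (hd : Differentiable ℝ f) (hf : Integrable f)
    (x : ℝ) : ‖f x‖ₑ ≤ ∫⁻ t, ‖deriv f t‖ₑ := by
  by_cases htop : ∫⁻ t, ‖deriv f t‖ₑ = ⊤
  · simp [htop]
  have hf' : Integrable (deriv f) :=
    ⟨(measurable_deriv f).aestronglyMeasurable, lt_top_iff_ne_top.2 htop⟩
  rw [← ofReal_integral_norm_eq_lintegral_enorm hf', ← ofReal_norm]
  refine ENNReal.ofReal_le_ofReal (le_of_forall_pos_le_add fun ε hε => ?_)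
  obtain ⟨a, hax, hfa⟩ : ∃ a < x, ‖f a‖ < ε := by
    by_contra! h
    have hsub : Set.Iio x ⊆ {a | ε ≤ ‖f a‖} := h
    have := (measure_mono (μ := volume) hsub).trans_lt (hf.measure_norm_ge_lt_top hε)
    simp at this
  have hftc : ∫ t in a..x, deriv f t = f x - f a :=
    intervalIntegral.integral_deriv_eq_sub (fun y _ => hd y) hf'.intervalIntegrable
  calc ‖f x‖ ≤ ‖f x - f a‖ + ‖f a‖ := norm_le_norm_sub_add _ _
    _ ≤ (∫ t in a..x, ‖deriv f t‖) + ε := by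
        rw [← hftc]
        exact add_le_add (intervalIntegral.norm_integral_le_integral_norm hax.le) hfa.le
    _ ≤ (∫ t, ‖deriv f t‖) + ε := by
        rw [intervalIntegral.integral_of_le hax.le]
        exact add_le_add_left
          (setIntegral_le_integral hf'.norm (.of_forall fun _ => norm_nonneg _)) ε

theorem ae_forall_enorm_le_lintegral_enorm_deriv {w : ℝ × ℝ → ℝ}
    (hd : ∀ y, Differentiable ℝ fun x => w (x, y)) (hi : Integrable w) :
    ∀ᵐ y, ∀ x, ‖w (x, y)‖ₑ ≤ ∫⁻ s, ‖deriv (fun s => w (s, y)) s‖ₑ := by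
  rw [Measure.volume_eq_prod] at hi
  filter_upwards [hi.prod_left_ae] with y hy x
  exact enorm_le_lintegral_enorm_deriv (hd y) hy x

theorem lintegral_enorm_sq_le_mul_lintegral_partial {w : ℝ × ℝ → ℝ} (hd : Differentiable ℝ w)
    (hi : Integrable w) :
    ∫⁻ p, ‖w p‖ₑ ^ 2 ≤ (∫⁻ p, ‖fderiv ℝ w p (1, 0)‖ₑ) * ∫⁻ p, ‖fderiv ℝ w p (0, 1)‖ₑ := by
  have hd₁ (y s : ℝ) : HasDerivAt (fun s => w (s, y)) (fderiv ℝ w (s, y) (1, 0)) s :=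
    (hd _).hasFDerivAt.comp_hasDerivAt s ((hasDerivAt_id s).prodMk (hasDerivAt_const s y))
  have hd₂ (x t : ℝ) : HasDerivAt (fun t => w (x, t)) (fderiv ℝ w (x, t) (0, 1)) t :=
    (hd _).hasFDerivAt.comp_hasDerivAt t ((hasDerivAt_const t x).prodMk (hasDerivAt_id t))
  set F : ℝ → ENNReal := fun y => ∫⁻ x, ‖fderiv ℝ w (x, y) (1, 0)‖ₑ
  set G : ℝ → ENNReal := fun x => ∫⁻ y, ‖fderiv ℝ w (x, y) (0, 1)‖ₑ
  have m₁ : Measurable fun p => ‖fderiv ℝ w p (1, 0)‖ₑ :=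
    (measurable_fderiv_apply_const ℝ w _).enorm
  have m₂ : Measurable fun p => ‖fderiv ℝ w p (0, 1)‖ₑ :=
    (measurable_fderiv_apply_const ℝ w _).enorm
  have hA : ∀ᵐ y, ∀ x, ‖w (x, y)‖ₑ ≤ F y := by
    filter_upwards [ae_forall_enorm_le_lintegral_enorm_deriv
      (fun y s => (hd₁ y s).differentiableAt) hi] with y hy x
    simpa only [fun s => (hd₁ y s).deriv] using hy x
  have hB : ∀ᵐ x, ∀ y, ‖w (x, y)‖ₑ ≤ G x := by
    filter_upwards [ae_forall_enorm_le_lintegral_enorm_deriv (w := fun p => w (p.2, p.1))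
      (fun x t => (hd₂ x t).differentiableAt) hi.swap] with x hx y
    simpa only [fun t => (hd₂ x t).deriv] using hx y
  have hpt : ∀ᵐ p : ℝ × ℝ, ‖w p‖ₑ ^ 2 ≤ G p.1 * F p.2 := by
    filter_upwards [Measure.quasiMeasurePreserving_fst.ae hB,
      Measure.quasiMeasurePreserving_snd.ae hA] with p hx hy
    rw [sq]
    exact mul_le_mul' (hx p.2) (hy p.1)
  calc ∫⁻ p, ‖w p‖ₑ ^ 2 ≤ ∫⁻ p : ℝ × ℝ, G p.1 * F p.2 := lintegral_mono_ae hpt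
    _ = (∫⁻ x, G x) * ∫⁻ y, F y :=
        lintegral_prod_mul m₂.lintegral_prod_right.aemeasurable
          m₁.lintegral_prod_left.aemeasurable
    _ = _ := by
        rw [mul_comm, Measure.volume_eq_prod, lintegral_prod_symm _ m₁.aemeasurable,
          lintegral_prod _ m₂.aemeasurable]

theorem lintegral_enorm_sq_le_sq_lintegral_enorm_fderiv {v : EuclideanSpace ℝ (Fin 2) → ℝ}
    (hd : Differentiable ℝ v) (hi : Integrable v) :
    ∫⁻ x, ‖v x‖ₑ ^ 2 ≤ (∫⁻ x, ‖fderiv ℝ v x‖ₑ) ^ 2 := by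
  let e : (ℝ × ℝ) ≃L[ℝ] EuclideanSpace ℝ (Fin 2) :=
    ((EuclideanSpace.equiv (Fin 2) ℝ).trans (ContinuousLinearEquiv.finTwoArrow ℝ ℝ)).symm
  have he : MeasurePreserving e :=
    (PiLp.volume_preserving_toLp (Fin 2)).comp (volume_preserving_finTwoArrow ℝ).symm
  have hemb : MeasurableEmbedding e := e.toHomeomorph.measurableEmbedding
  have hpartial (p : ℝ × ℝ) (q : ℝ × ℝ) (hq : ‖e q‖ₑ = 1) :
      ‖fderiv ℝ (v ∘ e) p q‖ₑ ≤ ‖fderiv ℝ v (e p)‖ₑ := by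
    rw [fderiv_comp p (hd _) e.differentiableAt, e.fderiv]
    simpa [hq] using (fderiv ℝ v (e p)).le_opENorm (e q)
  have hle (q : ℝ × ℝ) (hq : ‖e q‖ₑ = 1) :
      ∫⁻ p, ‖fderiv ℝ (v ∘ e) p q‖ₑ ≤ ∫⁻ x, ‖fderiv ℝ v x‖ₑ := by
    rw [← he.lintegral_comp_emb hemb]
    exact lintegral_mono fun p => hpartial p q hq
  calc ∫⁻ x, ‖v x‖ₑ ^ 2 = ∫⁻ p, ‖(v ∘ e) p‖ₑ ^ 2 :=
        (he.lintegral_comp_emb hemb fun x => ‖v x‖ₑ ^ 2).symm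
    _ ≤ (∫⁻ p, ‖fderiv ℝ (v ∘ e) p (1, 0)‖ₑ) * ∫⁻ p, ‖fderiv ℝ (v ∘ e) p (0, 1)‖ₑ :=
        lintegral_enorm_sq_le_mul_lintegral_partial (hd.comp e.differentiable)
          ((he.integrable_comp_emb hemb).2 hi)
    _ ≤ (∫⁻ x, ‖fderiv ℝ v x‖ₑ) ^ 2 := by
        rw [sq]
        gcongr <;> apply hle <;> simp [e, ← ofReal_norm, EuclideanSpace.norm_eq, Fin.sum_univ_two]

theorem lintegral_enorm_pow_four_le {u : EuclideanSpace ℝ (Fin 2) → ℝ} (hd : Differentiable ℝ u)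
    (hu : Integrable fun x => u x ^ 2) :
    ∫⁻ x, ‖u x‖ₑ ^ 4 ≤ 4 * (∫⁻ x, ‖u x‖ₑ ^ 2) * ∫⁻ x, ‖fderiv ℝ u x‖ₑ ^ 2 := by
  have hderiv (x) : ‖fderiv ℝ (fun x => u x ^ 2) x‖ₑ = 2 * (‖u x‖ₑ * ‖fderiv ℝ u x‖ₑ) := by
    rw [((hd x).hasFDerivAt.pow 2).fderiv, enorm_smul]
    simp [mul_assoc, Real.enorm_eq_ofReal_abs]
  calc ∫⁻ x, ‖u x‖ₑ ^ 4 = ∫⁻ x, ‖u x ^ 2‖ₑ ^ 2 := by simp_rw [enorm_pow, ← pow_mul]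
    _ ≤ (∫⁻ x, ‖fderiv ℝ (fun x => u x ^ 2) x‖ₑ) ^ 2 :=
        lintegral_enorm_sq_le_sq_lintegral_enorm_fderiv (hd.pow 2) hu
    _ = 4 * (∫⁻ x, ‖u x‖ₑ * ‖fderiv ℝ u x‖ₑ) ^ 2 := by
        simp_rw [hderiv]
        rw [lintegral_const_mul' _ _ (by simp), mul_pow]
        norm_num
    _ ≤ 4 * ((∫⁻ x, ‖u x‖ₑ ^ 2) * ∫⁻ x, ‖fderiv ℝ u x‖ₑ ^ 2) := by
        gcongr
        exact ENNReal.sq_lintegral_mul_le hd.continuous.measurable.enorm.aemeasurable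
          (measurable_fderiv ℝ u).enorm.aemeasurable
    _ = _ := (mul_assoc ..).symm

theorem two_mul_mul_sqrt_le_sqrt_pi_div_two_mul {a g : ℝ} (ha : 0 ≤ a) (hg : 0 ≤ g) :
    2 * a * √g ≤ √(Real.pi / 2) * √(a + g) ^ 3 := by
  refine le_of_pow_le_pow_left₀ two_ne_zero (by positivity) ?_
  have hcube : (√(a + g) ^ 3) ^ 2 = (a + g) ^ 3 := by
    rw [← pow_mul, mul_comm, pow_mul, Real.sq_sqrt (by positivity)]
  rw [mul_pow, mul_pow, mul_pow, hcube, Real.sq_sqrt hg, Real.sq_sqrt (by positivity)]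
  nlinarith [Real.pi_gt_three, mul_nonneg (mul_nonneg ha ha) hg, mul_nonneg (mul_nonneg ha hg) hg,
    pow_nonneg ha 3, pow_nonneg hg 3]

theorem lintegral_enorm_pow_three_le_s6 {u : EuclideanSpace ℝ (Fin 2) → ℝ} (hd : Differentiable ℝ u)
    (h2 : Integrable fun x => u x ^ 2) (hg : Integrable fun x => ‖fderiv ℝ u x‖ ^ 2) :
    ∫⁻ x, ‖u x‖ₑ ^ 3 ≤ ENNReal.ofReal
      (√(Real.pi / 2) * √((∫ x, u x ^ 2) + ∫ x, ‖fderiv ℝ u x‖ ^ 2) ^ 3) := by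
  set a := ∫ x, u x ^ 2
  set g := ∫ x, ‖fderiv ℝ u x‖ ^ 2
  have ha : 0 ≤ a := integral_nonneg fun x => sq_nonneg _
  have hg₀ : 0 ≤ g := integral_nonneg fun x => sq_nonneg _
  have hA : ∫⁻ x, ‖u x‖ₑ ^ 2 = ENNReal.ofReal a := lintegral_enorm_sq_eq_ofReal_integral h2
  have hG : ∫⁻ x, ‖fderiv ℝ u x‖ₑ ^ 2 = ENNReal.ofReal g := by
    simpa only [enorm_norm] using lintegral_enorm_sq_eq_ofReal_integral hg
  have hmu : AEMeasurable fun x => ‖u x‖ₑ := hd.continuous.measurable.enorm.aemeasurable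
  refine (ENNReal.pow_le_pow_left_iff two_ne_zero).1 ?_
  calc (∫⁻ x, ‖u x‖ₑ ^ 3) ^ 2 = (∫⁻ x, ‖u x‖ₑ * ‖u x‖ₑ ^ 2) ^ 2 := by simp_rw [← pow_succ']
    _ ≤ (∫⁻ x, ‖u x‖ₑ ^ 2) * ∫⁻ x, ‖u x‖ₑ ^ 4 := by
        simpa only [← pow_mul, Nat.reduceMul] using
          ENNReal.sq_lintegral_mul_le hmu (hmu.pow_const (2 : ℕ))
    _ ≤ (∫⁻ x, ‖u x‖ₑ ^ 2) * (4 * (∫⁻ x, ‖u x‖ₑ ^ 2) * ∫⁻ x, ‖fderiv ℝ u x‖ₑ ^ 2) := by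
        gcongr
        exact lintegral_enorm_pow_four_le hd h2
    _ = ENNReal.ofReal (a * (4 * a * g)) := by
        rw [hA, hG, ENNReal.ofReal_mul ha, ENNReal.ofReal_mul (by positivity),
          ENNReal.ofReal_mul (by norm_num), ENNReal.ofReal_ofNat]
    _ = ENNReal.ofReal (2 * a * √g) ^ 2 := by
        rw [← ENNReal.ofReal_pow (by positivity), mul_pow, mul_pow, Real.sq_sqrt hg₀]
        ring_nf
    _ ≤ _ := by
        gcongr ENNReal.ofReal ?_ ^ 2
        exact two_mul_mul_sqrt_le_sqrt_pi_div_two_mul ha hg₀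

theorem exp_integral_lower_bound (u : EuclideanSpace ℝ (Fin 2) → ℝ)
    (hdiff : Differentiable ℝ u)
    (h2 : Integrable (fun x => (u x) ^ 2))
    (hg : Integrable (fun x => ‖gradient u x‖ ^ 2)) :
    ∫⁻ x, ENNReal.ofReal (u x * (Real.exp (u x) - 1))
      ≥ ENNReal.ofReal
        ((Real.sqrt (∫ x, (u x) ^ 2)) ^ 4 /
          ((Real.sqrt (∫ x, (u x) ^ 2)) ^ 2 +
            Real.sqrt (Real.pi / 2) *
              (Real.sqrt ((∫ x, (u x) ^ 2) + ∫ x, ‖gradient u x‖ ^ 2)) ^ 3)) := by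
  have hgrad (x) : ‖gradient u x‖ = ‖fderiv ℝ u x‖ := (InnerProductSpace.toDual ℝ _).symm.norm_map _
  simp only [hgrad] at hg ⊢
  set a := ∫ x, u x ^ 2
  set D := a + √(Real.pi / 2) * √(a + ∫ x, ‖fderiv ℝ u x‖ ^ 2) ^ 3
  have ha : 0 ≤ a := integral_nonneg fun x => sq_nonneg _
  have hA : ∫⁻ x, ‖u x‖ₑ ^ 2 = ENNReal.ofReal a := lintegral_enorm_sq_eq_ofReal_integral h2
  have hCS : ENNReal.ofReal a ^ 2 ≤ (∫⁻ x, ‖u x‖ₑ ^ 2 / (1 + ‖u x‖ₑ)) * ENNReal.ofReal D := by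
    rw [← hA]
    refine (sq_lintegral_enorm_sq_le hdiff.continuous.measurable).trans ?_
    rw [hA, ENNReal.ofReal_add ha (by positivity)]
    gcongr
    exact lintegral_enorm_pow_three_le_s6 hdiff h2 hg
  have hpt (x) : ‖u x‖ₑ ^ 2 / (1 + ‖u x‖ₑ) ≤ ENNReal.ofReal (u x * (Real.exp (u x) - 1)) := by
    rw [Real.enorm_eq_ofReal_abs, ← ENNReal.ofReal_pow (abs_nonneg _), ← ENNReal.ofReal_one,
      ← ENNReal.ofReal_add zero_le_one (abs_nonneg _),
      ← ENNReal.ofReal_div_of_pos (by positivity), sq_abs]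
    exact ENNReal.ofReal_le_ofReal (sq_div_one_add_abs_le_mul_exp_sub_one _)
  rw [ge_iff_le, show √a ^ 4 = a ^ 2 by rw [pow_mul' √a 2 2, Real.sq_sqrt ha], Real.sq_sqrt ha]
  refine le_trans ?_ (lintegral_mono hpt)
  rcases ha.eq_or_lt with h0 | hpos
  · simp [← h0]
  rw [ENNReal.ofReal_div_of_pos (by positivity), ENNReal.ofReal_pow ha]
  exact ENNReal.div_le_of_le_mul hCS
end

section
/- Let r ≥ 0, ‖ς‖₂ ≥ 0 be reals. Then for every t ∈ [0,1], (1 - t²)r² + t⁴r²/(t² + √(π/2)·r) - t·r·‖ς‖₂ ≥ (√(2/π) - ‖ς‖₂)·r - 2/π. -/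
/-!
With `b = √(2/π)`, so that `√(π/2) = b⁻¹` and `b² = 2/π`, the fraction satisfies
`t⁴r²/(t² + b⁻¹r) = b t⁴ r - b² t⁶ + b² t⁸/(t² + b⁻¹r) ≥ b t⁴ r - b² t⁶`.
The remaining polynomial inequality holds because the difference of its two sides is
`(1 - t²)(r² - b(1 + t²)r + b²(1 + t² + t⁴)) + (1 - t) r c`, and the quadratic in `r` has
negative discriminant.
-/

lemma sub_le_sq_mul_sq_div_add_inv_mul {b s r : ℝ} (hb : 0 < b) (hs : 0 ≤ s)
    (hr : 0 ≤ r) :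
    b * s ^ 2 * r - b ^ 2 * s ^ 3 ≤ s ^ 2 * r ^ 2 / (s + b⁻¹ * r) := by
  rcases (add_nonneg hs (mul_nonneg (inv_nonneg.mpr hb.le) hr)).eq_or_lt with hD | hD
  · have hs0 : s = 0 := by nlinarith [mul_nonneg (inv_nonneg.mpr hb.le) hr]
    simp [hs0]
  · rw [le_div_iff₀ hD]
    have hsplit : (b * s ^ 2 * r - b ^ 2 * s ^ 3) * (s + b⁻¹ * r)
        = s ^ 2 * r ^ 2 - b ^ 2 * s ^ 4 := by
      field_simp
      ring
    nlinarith [sq_nonneg (b * s ^ 2)]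

lemma sq_sub_mul_add_sq_mul_nonneg (r b s : ℝ) :
    0 ≤ r ^ 2 - b * (1 + s) * r + b ^ 2 * (1 + s + s ^ 2) := by
  nlinarith [sq_nonneg (2 * r - b * (1 + s)), sq_nonneg (b * (1 + s)), sq_nonneg (b * s),
    sq_nonneg (b * (1 - s))]

lemma polynomial_coercivity_bound (b : ℝ) {r c t : ℝ} (hr : 0 ≤ r) (hc : 0 ≤ c)
    (ht : t ∈ Set.Icc (0 : ℝ) 1) :
    b * r - b ^ 2 - c * r ≤ (1 - t ^ 2) * r ^ 2 + b * t ^ 4 * r - b ^ 2 * t ^ 6 - t * r * c := by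
  obtain ⟨ht0, ht1⟩ := ht
  have hfactor : (1 - t ^ 2) * r ^ 2 + b * t ^ 4 * r - b ^ 2 * t ^ 6 - t * r * c
      - (b * r - b ^ 2 - c * r)
      = (1 - t ^ 2) * (r ^ 2 - b * (1 + t ^ 2) * r + b ^ 2 * (1 + t ^ 2 + (t ^ 2) ^ 2))
        + (1 - t) * r * c := by
    ring
  have h1t : 0 ≤ 1 - t ^ 2 := by nlinarith
  have hrc : 0 ≤ (1 - t) * r * c := mul_nonneg (mul_nonneg (by linarith) hr) hc
  linarith [mul_nonneg h1t (sq_sub_mul_add_sq_mul_nonneg r b (t ^ 2))]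

theorem coercivity_real_inequality (r c t : ℝ) (hr : 0 ≤ r) (hc : 0 ≤ c)
    (ht : t ∈ Set.Icc (0 : ℝ) 1) :
    (1 - t ^ 2) * r ^ 2 + t ^ 4 * r ^ 2 / (t ^ 2 + Real.sqrt (Real.pi / 2) * r)
      - t * r * c
    ≥ (Real.sqrt (2 / Real.pi) - c) * r - 2 / Real.pi := by
  set b := Real.sqrt (2 / Real.pi)
  have hb : 0 < b := Real.sqrt_pos.mpr (by positivity)
  have hb_inv : Real.sqrt (Real.pi / 2) = b⁻¹ := by rw [← Real.sqrt_inv, inv_div]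
  have hb_sq : b ^ 2 = 2 / Real.pi := Real.sq_sqrt (by positivity)
  have hfrac : b * t ^ 4 * r - b ^ 2 * t ^ 6 ≤ t ^ 4 * r ^ 2 / (t ^ 2 + b⁻¹ * r) := by
    simpa only [← pow_mul] using
      sub_le_sq_mul_sq_div_add_inv_mul hb (sq_nonneg t) hr
  have hpoly := polynomial_coercivity_bound b hr hc ht
  rw [hb_inv]
  rw [hb_sq] at hfrac hpoly
  linarith
end

section
/- With u₀ and g₀ the Taubes background functions for n vortices with parameter λ > 4n, for every real u ≤ 0 and every point x (away from the vortex centers), u·(e^{u + u₀(x)} + g₀(x) - 1) ≥ ((λ - 4n)/λ)·|u|²/(1 + |u|). -/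
/-!
Write `yₐ = λ / (|x - xₐ|² + λ) ∈ (0, 1)`. Then `e^{u₀} = ∏ₐ (1 - yₐ) =: P` and
`g₀ = (4/λ) ∑ₐ yₐ²`. Since `yₐ² ≤ yₐ ≤ 1 - P` for every `a`, one gets the bound
`g₀ ≤ (4n/λ)(1 - P)`, and with `c = 4n/λ`, `t = e^u` the identity
`1 - c(1 - P) - tP - (1 - c)(1 - t) = t(1 - P)(1 - c) + cP(1 - t) ≥ 0` reduces the claim to
`|u|(1 - e^u) ≥ |u|²/(1 + |u|)`, i.e. to `1 + |u| ≤ e^{|u|}`.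
-/

open Finset

lemma prod_one_sub_le_one_sub {ι : Type*} {s : Finset ι} {y : ι → ℝ}
    (hy0 : ∀ i ∈ s, 0 ≤ y i) (hy1 : ∀ i ∈ s, y i ≤ 1) {a : ι} (ha : a ∈ s) :
    ∏ i ∈ s, (1 - y i) ≤ 1 - y a := by
  simpa using prod_le_prod_of_subset_of_le_one (singleton_subset_iff.2 ha)
    (fun i hi => sub_nonneg.2 (hy1 i hi)) (fun i hi _ => by linarith [hy0 i hi])

lemma sum_sq_le_card_mul_one_sub_prod {ι : Type*} {s : Finset ι} {y : ι → ℝ}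
    (hy0 : ∀ i ∈ s, 0 ≤ y i) (hy1 : ∀ i ∈ s, y i ≤ 1) :
    ∑ i ∈ s, y i ^ 2 ≤ #s * (1 - ∏ i ∈ s, (1 - y i)) := by
  rw [← nsmul_eq_mul]
  refine sum_le_card_nsmul _ _ _ fun a ha => ?_
  have := prod_one_sub_le_one_sub hy0 hy1 ha
  nlinarith [hy0 a ha, hy1 a ha]

lemma exp_neg_log_one_add_div {r lam : ℝ} (hr : 0 < r) (hlam : 0 < lam) :
    Real.exp (-Real.log (1 + lam / r)) = 1 - lam / (r + lam) := by
  rw [Real.exp_neg, Real.exp_log (by positivity)]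
  field_simp
  ring

lemma four_mul_div_add_sq {r lam : ℝ} (hlam : lam ≠ 0) :
    4 * lam / (r + lam) ^ 2 = 4 / lam * (lam / (r + lam)) ^ 2 := by
  field_simp

lemma sq_div_one_add_abs_le_neg_mul_one_sub_exp {u : ℝ} (hu : u ≤ 0) :
    u ^ 2 / (1 + |u|) ≤ -u * (1 - Real.exp u) := by
  have hexp : Real.exp u * (1 - u) ≤ 1 := by
    have := mul_le_mul_of_nonneg_left (Real.add_one_le_exp (-u)) (Real.exp_pos u).le
    rwa [← Real.exp_add, add_neg_cancel, Real.exp_zero, add_comm, ← sub_eq_add_neg] at this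
  rw [abs_of_nonpos hu, div_le_iff₀ (by linarith)]
  nlinarith [mul_le_mul_of_nonneg_left hexp (neg_nonneg.2 hu)]

lemma one_sub_mul_one_sub_le {t P c : ℝ} (ht0 : 0 ≤ t) (ht1 : t ≤ 1) (hP0 : 0 ≤ P)
    (hP1 : P ≤ 1) (hc0 : 0 ≤ c) (hc1 : c ≤ 1) :
    (1 - c) * (1 - t) ≤ 1 - c * (1 - P) - t * P := by
  have key : 1 - c * (1 - P) - t * P - (1 - c) * (1 - t) =
      t * (1 - P) * (1 - c) + c * P * (1 - t) := by ring
  have : 0 ≤ t * (1 - P) * (1 - c) + c * P * (1 - t) := by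
    have := sub_nonneg.2 hP1; have := sub_nonneg.2 hc1; have := sub_nonneg.2 ht1
    positivity
  linarith

lemma one_sub_mul_sq_div_le_mul_exp_mul_add_sub_one {u P g c : ℝ} (hu : u ≤ 0)
    (hP0 : 0 ≤ P) (hP1 : P ≤ 1) (hc0 : 0 ≤ c) (hc1 : c ≤ 1) (hg : g ≤ c * (1 - P)) :
    (1 - c) * (u ^ 2 / (1 + |u|)) ≤ u * (Real.exp u * P + g - 1) :=
  calc (1 - c) * (u ^ 2 / (1 + |u|))
      ≤ (1 - c) * (-u * (1 - Real.exp u)) :=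
        mul_le_mul_of_nonneg_left (sq_div_one_add_abs_le_neg_mul_one_sub_exp hu) (by linarith)
    _ = -u * ((1 - c) * (1 - Real.exp u)) := by ring
    _ ≤ -u * (1 - c * (1 - P) - Real.exp u * P) :=
        mul_le_mul_of_nonneg_left (one_sub_mul_one_sub_le (Real.exp_pos u).le
          (Real.exp_le_one_iff.2 hu) hP0 hP1 hc0 hc1) (by linarith)
    _ ≤ -u * (1 - g - Real.exp u * P) := mul_le_mul_of_nonneg_left (by linarith) (by linarith)
    _ = u * (Real.exp u * P + g - 1) := by ring

theorem taubes_estimate_nonpos_general (n : ℕ) (lam : ℝ)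
    (hlam : 4 * n < lam)
    (p : Fin n → EuclideanSpace ℝ (Fin 2))
    (x : EuclideanSpace ℝ (Fin 2)) (hx : ∀ a, x ≠ p a)
    (u : ℝ) (hu : u ≤ 0) :
    u * (Real.exp (u + (-(∑ a, Real.log (1 + lam / ‖x - p a‖ ^ 2))))
          + (∑ a, 4 * lam / (‖x - p a‖ ^ 2 + lam) ^ 2) - 1)
      ≥ ((lam - 4 * n) / lam) * (u ^ 2 / (1 + |u|)) := by
  have hlam0 : 0 < lam := lt_of_le_of_lt (by positivity) hlam
  have hr : ∀ a, 0 < ‖x - p a‖ ^ 2 := fun a => by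
    have := norm_pos_iff.2 (sub_ne_zero.2 (hx a)); positivity
  set y : Fin n → ℝ := fun a => lam / (‖x - p a‖ ^ 2 + lam)
  have hy0 : ∀ a ∈ univ, 0 ≤ y a := fun a _ => div_nonneg hlam0.le (by linarith [hr a])
  have hy1 : ∀ a ∈ univ, y a ≤ 1 := fun a _ =>
    (div_le_one (by linarith [hr a])).2 (by linarith [hr a])
  have hexp : Real.exp (u + -∑ a, Real.log (1 + lam / ‖x - p a‖ ^ 2)) =
      Real.exp u * ∏ a, (1 - y a) := by
    rw [Real.exp_add, ← sum_neg_distrib, Real.exp_sum]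
    simp only [exp_neg_log_one_add_div (hr _) hlam0, y]
  have hg : ∑ a, 4 * lam / (‖x - p a‖ ^ 2 + lam) ^ 2 ≤ 4 * n / lam * (1 - ∏ a, (1 - y a)) :=
    calc ∑ a, 4 * lam / (‖x - p a‖ ^ 2 + lam) ^ 2 = 4 / lam * ∑ a, y a ^ 2 := by
          simp only [four_mul_div_add_sq hlam0.ne', mul_sum, y]
      _ ≤ 4 / lam * (n * (1 - ∏ a, (1 - y a))) := by
          gcongr; simpa using sum_sq_le_card_mul_one_sub_prod hy0 hy1
      _ = 4 * n / lam * (1 - ∏ a, (1 - y a)) := by ring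
  rw [hexp, ge_iff_le, show (lam - 4 * n) / lam = 1 - 4 * n / lam by field_simp]
  have hP0 : ∀ a ∈ univ, 0 ≤ 1 - y a := fun a ha => sub_nonneg.2 (hy1 a ha)
  exact one_sub_mul_sq_div_le_mul_exp_mul_add_sub_one hu (prod_nonneg hP0)
    (prod_le_one hP0 fun a ha => by linarith [hy0 a ha]) (by positivity)
    ((div_le_one hlam0).2 hlam.le) hg

theorem taubes_estimate_nonpos (n : ℕ) (hn : 1 ≤ n) (lam : ℝ)
    (hlam : 4 * n < lam)
    (p : Fin n → EuclideanSpace ℝ (Fin 2))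
    (x : EuclideanSpace ℝ (Fin 2)) (hx : ∀ a, x ≠ p a)
    (u : ℝ) (hu : u ≤ 0) :
    u * (Real.exp (u + (-(∑ a, Real.log (1 + lam / ‖x - p a‖ ^ 2))))
          + (∑ a, 4 * lam / (‖x - p a‖ ^ 2 + lam) ^ 2) - 1)
      ≥ ((lam - 4 * n) / lam) * (u ^ 2 / (1 + |u|)) :=
  taubes_estimate_nonpos_general n lam hlam p x hx u hu
end
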